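/- Let r₀ ∈ ℝ, λ > 0, and let μ : [r₀,∞) → ℝ be non-increasing. Then there exists a locally absolutely continuous, non-decreasing function β : [r₀,∞) → ℝ with β(r₀) = β̄₋(r₀), satisfying the Riccati equation β'(r) = β(r)² + μ(r)β(r) − λ for almost every r ∈ [r₀,∞), and such that β(r) ≤ β₋(r) = −μ(r)/2 − √(μ(r)²/4 + λ) for almost every r ∈ [r₀,∞). -/

import Mathlib

open MeasureTheory Filter Set intervalIntegral
open scoped BoundedContinuousFunction

/-- `β₋(r) = −μ(r)/2 − √(μ(r)²/4 + λ)`. -/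
noncomputable def betaMinus (lam : ℝ) (μ : ℝ → ℝ) (r : ℝ) : ℝ :=
  -μ r / 2 - Real.sqrt (μ r ^ 2 / 4 + lam)

lemma sqrtAux_neg (lam m : ℝ) (hlam : 0 < lam) : -m/2 - Real.sqrt (m^2/4+lam) < 0 := by
  have h := Real.sq_sqrt (by positivity : (0:ℝ) ≤ m^2/4+lam)
  have h2 := Real.sqrt_nonneg (m^2/4+lam)
  nlinarith [sq_nonneg (Real.sqrt (m^2/4+lam) + m/2)]

lemma sqrtAux_mono (lam m m' : ℝ) (hlam : 0 < lam) (h : m' ≤ m) :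
    -m/2 - Real.sqrt (m^2/4+lam) ≤ -m'/2 - Real.sqrt (m'^2/4+lam) := by
  have h1 := Real.sq_sqrt (by positivity : (0:ℝ) ≤ m^2/4+lam)
  have h1' := Real.sq_sqrt (by positivity : (0:ℝ) ≤ m'^2/4+lam)
  have h2 := Real.sqrt_nonneg (m^2/4+lam)
  have h2' := Real.sqrt_nonneg (m'^2/4+lam)
  have k2 : 2 * Real.sqrt (m^2/4+lam) + m ≥ 0 := by nlinarith
  have k2' : 2 * Real.sqrt (m'^2/4+lam) + m' ≥ 0 := by nlinarith
  nlinarith [mul_nonneg (sub_nonneg.2 h) k2, mul_nonneg (sub_nonneg.2 h) k2',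
    sq_nonneg (Real.sqrt (m^2/4+lam) + Real.sqrt (m'^2/4+lam))]

lemma betaMinus_neg (lam : ℝ) (hlam : 0 < lam) (ν : ℝ → ℝ) (s : ℝ) :
    betaMinus lam ν s < 0 := by
  have := sqrtAux_neg lam (ν s) hlam
  simpa [betaMinus] using this

lemma betaMinus_mono (lam : ℝ) (hlam : 0 < lam) (ν : ℝ → ℝ) (hν : Antitone ν) :
    Monotone (betaMinus lam ν) := fun s t hst => sqrtAux_mono lam (ν s) (ν t) hlam (hν hst)

lemma betaMinus_root (lam : ℝ) (hlam : 0 < lam) (ν : ℝ → ℝ) (s : ℝ) :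
    (betaMinus lam ν s)^2 + ν s * (betaMinus lam ν s) - lam = 0 := by
  have h := Real.sq_sqrt (by positivity : (0:ℝ) ≤ (ν s)^2/4+lam)
  simp only [betaMinus]
  nlinarith [h]

lemma betaMinus_two_add (lam : ℝ) (ν : ℝ → ℝ) (s : ℝ) :
    2 * betaMinus lam ν s + ν s ≤ 0 := by
  have := Real.sqrt_nonneg ((ν s)^2/4+lam)
  simp only [betaMinus]
  linarith

lemma c_le_b (r₀ lam : ℝ) (ν : ℝ → ℝ) (hb : Monotone (betaMinus lam ν)) (t : ℝ) (ht : r₀ < t) :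
    Filter.limsup (betaMinus lam ν) (nhdsWithin r₀ (Set.Ici r₀)) ≤ betaMinus lam ν t := by
  apply Filter.limsup_le_of_le
  · refine IsBoundedUnder.isCoboundedUnder_le ⟨betaMinus lam ν r₀, eventually_map.2 ?_⟩
    filter_upwards [self_mem_nhdsWithin] with x hx
    exact hb hx
  · filter_upwards [mem_nhdsWithin_of_mem_nhds (Iio_mem_nhds ht)] with x hx
    exact hb hx.le

lemma aux_intInt {f : ℝ → ℝ} (hf : Measurable f) {C : ℝ} {a b : ℝ}
    (hC : ∀ s ∈ Set.uIoc a b, |f s| ≤ C) : IntervalIntegrable f volume a b := by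
  rw [intervalIntegrable_iff]
  refine Integrable.mono' (g := fun _ => C) (integrableOn_const measure_Ioc_lt_top.ne)
    hf.aestronglyMeasurable ?_
  exact (ae_restrict_iff' measurableSet_uIoc).2 (ae_of_all _ fun s hs => by
    simpa [Real.norm_eq_abs] using hC s hs)

/-- The clamp of `x` into `[min c (β₋ s), β₋ s]`. -/
noncomputable def riccY (lam c : ℝ) (ν : ℝ → ℝ) (s x : ℝ) : ℝ :=
  max (min x (betaMinus lam ν s)) (min c (betaMinus lam ν s))

/-- The truncated Riccati field. -/
noncomputable def riccG (lam c : ℝ) (ν : ℝ → ℝ) (s x : ℝ) : ℝ :=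
  (riccY lam c ν s x - betaMinus lam ν s) *
    (riccY lam c ν s x + ν s + betaMinus lam ν s)

section riccG
variable (r₀ lam c : ℝ) (ν : ℝ → ℝ)

lemma riccY_le (s x : ℝ) : riccY lam c ν s x ≤ betaMinus lam ν s :=
  max_le (min_le_right _ _) (min_le_right _ _)

lemma riccY_ge (hlam : 0 < lam) (hν : Antitone ν) {s : ℝ} (hs : r₀ ≤ s) (x : ℝ) :
    min c (betaMinus lam ν r₀) ≤ riccY lam c ν s x :=
  le_trans (min_le_min (le_refl c) (betaMinus_mono lam hlam ν hν hs)) (le_max_right _ _)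

lemma riccG_nonneg (hlam : 0 < lam) (s x : ℝ) : 0 ≤ riccG lam c ν s x := by
  have h1 : riccY lam c ν s x ≤ betaMinus lam ν s := riccY_le lam c ν s x
  have h2 := betaMinus_two_add lam ν s
  have h3 := betaMinus_neg lam hlam ν s
  have : riccY lam c ν s x + ν s + betaMinus lam ν s ≤ 0 := by linarith
  rw [riccG]
  have h4 : riccY lam c ν s x - betaMinus lam ν s ≤ 0 := by linarith
  nlinarith [mul_nonneg (neg_nonneg.2 h4) (neg_nonneg.2 this)]

lemma riccG_eq (hlam : 0 < lam) {s x : ℝ} (h1 : min c (betaMinus lam ν s) ≤ x)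
    (h2 : x ≤ betaMinus lam ν s) :
    riccG lam c ν s x = x^2 + ν s * x - lam := by
  have hy : riccY lam c ν s x = x := by
    rw [riccY, min_eq_left h2, max_eq_left h1]
  rw [riccG, hy]
  linear_combination (-1 : ℝ) * betaMinus_root lam hlam ν s

lemma riccG_zero (hlam : 0 < lam) {s x : ℝ} (h : betaMinus lam ν s ≤ x) :
    riccG lam c ν s x = 0 := by
  have hy : riccY lam c ν s x = betaMinus lam ν s := by
    rw [riccY, min_eq_right h, max_eq_left (min_le_right _ _)]
  rw [riccG, hy, sub_self, zero_mul]

lemma riccG_meas (hlam : 0 < lam) (hν : Antitone ν) (u : ℝ → ℝ) (hu : Measurable u) :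
    Measurable (fun s => riccG lam c ν s (u s)) := by
  have hb : Measurable (betaMinus lam ν) := (betaMinus_mono lam hlam ν hν).measurable
  have hνm : Measurable ν := hν.measurable
  have hy : Measurable (fun s => riccY lam c ν s (u s)) :=
    (hu.min hb).max (measurable_const.min hb)
  exact (hy.sub hb).mul ((hy.add hνm).add hb)

lemma abs_add3_le {m' νs z z' : ℝ} (hm : m' ≤ 0) (hz1 : m' ≤ z) (hz2 : z ≤ 0)
    (hz1' : m' ≤ z') (hz2' : z' ≤ 0) (hν1 : -|νs| ≤ νs) (hν2 : νs ≤ |νs|) :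
    |z + z' + νs| ≤ 2 * |m'| + |νs| := by
  rw [abs_of_nonpos hm] at *
  rw [abs_le]
  constructor <;> nlinarith [abs_nonneg νs]

lemma riccG_lip (hlam : 0 < lam) (hν : Antitone ν) (R : ℝ) {s : ℝ}
    (hs : s ∈ Set.Icc r₀ R) (x x' : ℝ) :
    |riccG lam c ν s x - riccG lam c ν s x'| ≤
      (2 * |min c (betaMinus lam ν r₀)| + |ν r₀| + |ν R|) * |x - x'| := by
  set m' := min c (betaMinus lam ν r₀) with hm'
  set y1 := riccY lam c ν s x
  set y2 := riccY lam c ν s x'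
  have hid : riccG lam c ν s x - riccG lam c ν s x' = (y1 - y2) * (y1 + y2 + ν s) := by
    rw [riccG, riccG]; ring
  have hy1m : m' ≤ y1 := riccY_ge r₀ lam c ν hlam hν hs.1 x
  have hy2m : m' ≤ y2 := riccY_ge r₀ lam c ν hlam hν hs.1 x'
  have hy10 : y1 ≤ 0 := le_trans (riccY_le lam c ν s x) (betaMinus_neg lam hlam ν s).le
  have hy20 : y2 ≤ 0 := le_trans (riccY_le lam c ν s x') (betaMinus_neg lam hlam ν s).le
  have hm0 : m' ≤ 0 := le_trans (min_le_right _ _) (betaMinus_neg lam hlam ν r₀).le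
  have hyy : |y1 - y2| ≤ |x - x'| := by
    refine le_trans (abs_max_sub_max_le_abs _ _ _) ?_
    refine le_trans (abs_min_sub_min_le_max x (betaMinus lam ν s) x' (betaMinus lam ν s)) ?_
    simp
  have hνbound : |ν s| ≤ |ν r₀| + |ν R| := by
    have h1 : ν s ≤ ν r₀ := hν hs.1
    have h2 : ν R ≤ ν s := hν hs.2
    rw [abs_le]
    constructor
    · linarith [neg_abs_le (ν R), abs_nonneg (ν r₀)]
    · linarith [le_abs_self (ν r₀), abs_nonneg (ν R)]
  have hsum : |y1 + y2 + ν s| ≤ 2 * |m'| + |ν r₀| + |ν R| := by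
    have := abs_add3_le hm0 hy1m hy10 hy2m hy20 (neg_abs_le (ν s)) (le_abs_self (ν s))
    linarith
  rw [hid, abs_mul]
  calc |y1 - y2| * |y1 + y2 + ν s| ≤ |x - x'| * (2 * |m'| + |ν r₀| + |ν R|) :=
        mul_le_mul hyy hsum (abs_nonneg _) (abs_nonneg _)
    _ = (2 * |m'| + |ν r₀| + |ν R|) * |x - x'| := mul_comm _ _

lemma riccG_bound (hlam : 0 < lam) (hν : Antitone ν) (R : ℝ) {s : ℝ}
    (hs : s ∈ Set.Icc r₀ R) (x : ℝ) :
    |riccG lam c ν s x| ≤ |min c (betaMinus lam ν r₀)| *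
      (2 * |min c (betaMinus lam ν r₀)| + |ν r₀| + |ν R|) := by
  set m' := min c (betaMinus lam ν r₀) with hm'
  set y1 := riccY lam c ν s x
  have hy1m : m' ≤ y1 := riccY_ge r₀ lam c ν hlam hν hs.1 x
  have hy1b : y1 ≤ betaMinus lam ν s := riccY_le lam c ν s x
  have hbneg := betaMinus_neg lam hlam ν s
  have hy10 : y1 ≤ 0 := le_trans hy1b hbneg.le
  have hm0 : m' ≤ 0 := le_trans (min_le_right _ _) (betaMinus_neg lam hlam ν r₀).le
  have hmb : m' ≤ betaMinus lam ν s :=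
    le_trans (min_le_right _ _) (betaMinus_mono lam hlam ν hν hs.1)
  have h1 : |y1 - betaMinus lam ν s| ≤ |m'| := by
    rw [abs_of_nonpos hm0, abs_of_nonpos (by linarith : y1 - betaMinus lam ν s ≤ 0)]
    linarith
  have hνbound : |ν s| ≤ |ν r₀| + |ν R| := by
    have hh1 : ν s ≤ ν r₀ := hν hs.1
    have hh2 : ν R ≤ ν s := hν hs.2
    rw [abs_le]
    constructor
    · linarith [neg_abs_le (ν R), abs_nonneg (ν r₀)]
    · linarith [le_abs_self (ν r₀), abs_nonneg (ν R)]
  have h2 : |y1 + betaMinus lam ν s + ν s| ≤ 2 * |m'| + |ν r₀| + |ν R| := by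
    have := abs_add3_le hm0 hy1m hy10 hmb hbneg.le (neg_abs_le (ν s)) (le_abs_self (ν s))
    linarith
  rw [riccG, abs_mul]
  have h2' : |riccY lam c ν s x + ν s + betaMinus lam ν s| ≤ 2 * |m'| + |ν r₀| + |ν R| := by
    rw [show riccY lam c ν s x + ν s + betaMinus lam ν s
      = y1 + betaMinus lam ν s + ν s by ring]
    exact h2
  exact mul_le_mul h1 h2' (abs_nonneg _) (abs_nonneg _)

end riccG

lemma picard (r₀ R c L M : ℝ) (hR : r₀ < R) (hL : 0 ≤ L) (hM : 0 ≤ M)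
    (g : ℝ → ℝ → ℝ)
    (hmeas : ∀ u : ℝ → ℝ, Measurable u → Measurable (fun s => g s (u s)))
    (hbound : ∀ s ∈ Set.Icc r₀ R, ∀ x, |g s x| ≤ M)
    (hlip : ∀ s ∈ Set.Icc r₀ R, ∀ x x', |g s x - g s x'| ≤ L * |x - x'|) :
    ∃! u : ℝ →ᵇ ℝ, ∀ r, u r = c + ∫ s in r₀..(min (max r r₀) R), g s (u s) := by
  set ρ : ℝ → ℝ := fun r => min (max r r₀) R with hρ
  have hρcont : Continuous ρ := (continuous_id.max continuous_const).min continuous_const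
  have hρ₀ : ∀ r, r₀ ≤ ρ r := fun r => le_min (le_max_right _ _) hR.le
  have hρR : ∀ r, ρ r ≤ R := fun r => min_le_right _ _
  have hρid : ∀ s ∈ Set.Icc r₀ R, ρ s = s := fun s hs => by
    simp [hρ, max_eq_left hs.1, min_eq_left hs.2]
  -- the truncated integrand
  set h : (ℝ →ᵇ ℝ) → ℝ → ℝ :=
    fun u => (Set.Icc r₀ R).indicator (fun s => g s (u s)) with hh
  have hhmeas : ∀ u, Measurable (h u) := fun u =>
    ((hmeas u (map_continuous u).measurable)).indicator measurableSet_Icc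
  have hhbound : ∀ u s, |h u s| ≤ M := by
    intro u s
    by_cases hs : s ∈ Set.Icc r₀ R
    · rw [hh]; simp only [Set.indicator_of_mem hs]; exact hbound s hs _
    · rw [hh]; simp [Set.indicator_of_notMem hs, hM]
  have hhint : ∀ u a b, IntervalIntegrable (h u) volume a b := fun u a b =>
    aux_intInt (hhmeas u) (fun s _ => hhbound u s)
  have hprimcont : ∀ u : ℝ →ᵇ ℝ, Continuous (fun x => ∫ s in r₀..x, h u s) := fun u =>
    intervalIntegral.continuous_primitive (hhint u) r₀
  have hprimbound : ∀ (u : ℝ →ᵇ ℝ) (x : ℝ), |∫ s in r₀..x, h u s| ≤ M * |x - r₀| := by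
    intro u x
    simpa [Real.norm_eq_abs] using
      intervalIntegral.norm_integral_le_of_norm_le_const
        (f := h u) (a := r₀) (b := x) (C := M)
        (fun s _ => by simpa [Real.norm_eq_abs] using hhbound u s)
  -- the Picard operator
  set P : (ℝ →ᵇ ℝ) → (ℝ →ᵇ ℝ) := fun u =>
    BoundedContinuousFunction.mkOfBound
      ⟨fun r => c + ∫ s in r₀..ρ r, h u s, by
        exact continuous_const.add ((hprimcont u).comp hρcont)⟩
      (2 * (M * (R - r₀)))
      (by
        intro x y
        have bx := hprimbound u (ρ x)
        have by' := hprimbound u (ρ y)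
        have hx : |ρ x - r₀| ≤ R - r₀ := by
          rw [abs_of_nonneg (by linarith [hρ₀ x])]; linarith [hρR x]
        have hy : |ρ y - r₀| ≤ R - r₀ := by
          rw [abs_of_nonneg (by linarith [hρ₀ y])]; linarith [hρR y]
        rw [Real.dist_eq]
        have : |(c + ∫ s in r₀..ρ x, h u s) - (c + ∫ s in r₀..ρ y, h u s)|
            ≤ |∫ s in r₀..ρ x, h u s| + |∫ s in r₀..ρ y, h u s| := by
          rw [add_sub_add_left_eq_sub]; exact abs_sub _ _
        refine this.trans ?_
        nlinarith [mul_le_mul_of_nonneg_left hx hM, mul_le_mul_of_nonneg_left hy hM]) with hP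
  have hPapp : ∀ (u : ℝ →ᵇ ℝ) (r : ℝ), P u r = c + ∫ s in r₀..ρ r, g s (u s) := by
    intro u r
    have : ∫ s in r₀..ρ r, h u s = ∫ s in r₀..ρ r, g s (u s) := by
      refine intervalIntegral.integral_congr (g := fun s => g s (u s)) (fun s hs => ?_)
      rw [Set.uIcc_of_le (hρ₀ r)] at hs
      have hsmem : s ∈ Set.Icc r₀ R := ⟨hs.1, hs.2.trans (hρR r)⟩
      show h u s = _
      rw [hh]
      exact Set.indicator_of_mem hsmem _
    rw [hP]
    rw [show (BoundedContinuousFunction.mkOfBound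
      ⟨fun r => c + ∫ s in r₀..ρ r, h u s, by
        exact continuous_const.add ((hprimcont u).comp hρcont)⟩
      (2 * (M * (R - r₀))) _) r = c + ∫ s in r₀..ρ r, h u s from rfl, this]
  -- the key iterate estimate
  have key : ∀ n : ℕ, ∀ u v : ℝ →ᵇ ℝ, ∀ r : ℝ,
      |(P^[n] u) r - (P^[n] v) r| ≤ L^n * (ρ r - r₀)^n / (n.factorial : ℝ) * dist u v := by
    intro n
    induction n with
    | zero =>
      intro u v r
      simp only [Function.iterate_zero, id_eq, pow_zero, Nat.factorial_zero, Nat.cast_one]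
      have := BoundedContinuousFunction.dist_coe_le_dist (f := u) (g := v) r
      rw [Real.dist_eq] at this
      linarith
    | succ n ih =>
      intro u v r
      rw [Function.iterate_succ_apply', Function.iterate_succ_apply']
      set a := P^[n] u with ha
      set b' := P^[n] v with hb'
      set C : ℝ := L^(n+1) / (n.factorial : ℝ) * dist u v with hC
      have hC0 : 0 ≤ C := by
        rw [hC]; positivity
      have hsub : P a r - P b' r = ∫ s in r₀..ρ r, (h a s - h b' s) := by
        have h1 : P a r = c + ∫ s in r₀..ρ r, h a s := rfl
        have h2 : P b' r = c + ∫ s in r₀..ρ r, h b' s := rfl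
        rw [h1, h2, intervalIntegral.integral_sub (hhint a r₀ (ρ r)) (hhint b' r₀ (ρ r))]
        ring
      rw [hsub]
      have hbnd : ∀ s ∈ Set.uIoc r₀ (ρ r), ‖h a s - h b' s‖ ≤ C * (s - r₀)^n := by
        intro s hs
        rw [Set.uIoc_of_le (hρ₀ r)] at hs
        have hsmem : s ∈ Set.Icc r₀ R := ⟨hs.1.le, hs.2.trans (hρR r)⟩
        have e1 : h a s = g s (a s) := by rw [hh]; exact Set.indicator_of_mem hsmem _
        have e2 : h b' s = g s (b' s) := by rw [hh]; exact Set.indicator_of_mem hsmem _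
        rw [Real.norm_eq_abs, e1, e2]
        have l1 : |g s (a s) - g s (b' s)| ≤ L * |a s - b' s| := hlip s hsmem _ _
        have l2 : |a s - b' s| ≤ L^n * (ρ s - r₀)^n / (n.factorial : ℝ) * dist u v := ih u v s
        rw [hρid s hsmem] at l2
        calc |g s (a s) - g s (b' s)| ≤ L * |a s - b' s| := l1
          _ ≤ L * (L^n * (s - r₀)^n / (n.factorial : ℝ) * dist u v) :=
              mul_le_mul_of_nonneg_left l2 hL
          _ = C * (s - r₀)^n := by rw [hC]; ring
      have φint : IntervalIntegrable (fun s => C * (s - r₀)^n) volume r₀ (ρ r) :=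
        ((continuous_const.mul ((continuous_id.sub continuous_const).pow n)).intervalIntegrable _ _)
      have hle := intervalIntegral.norm_integral_le_abs_of_norm_le (μ := volume)
        (f := fun s => h a s - h b' s)
        ((ae_restrict_iff' measurableSet_uIoc).2 (ae_of_all _ hbnd)) φint
      rw [Real.norm_eq_abs] at hle
      refine hle.trans ?_
      have hval : ∫ s in r₀..ρ r, C * (s - r₀)^n = C * ((ρ r - r₀)^(n+1) / (n+1)) := by
        rw [intervalIntegral.integral_const_mul]
        congr 1
        rw [show (fun s : ℝ => (s - r₀)^n) = fun s => (fun t : ℝ => t^n) (s - r₀) from rfl,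
          intervalIntegral.integral_comp_sub_right (fun t : ℝ => t^n) r₀, integral_pow]
        simp
      have hρr0 : 0 ≤ ρ r - r₀ := by linarith [hρ₀ r]
      rw [hval, abs_of_nonneg (by positivity : (0:ℝ) ≤ C * ((ρ r - r₀)^(n+1) / (n+1)))]
      have hfac : (((n+1).factorial : ℕ) : ℝ) = ((n:ℝ)+1) * (n.factorial : ℝ) := by
        push_cast [Nat.factorial_succ]; ring
      rw [hC, hfac]
      have hn1 : (0:ℝ) < (n:ℝ)+1 := by positivity
      have hf0 : (0:ℝ) < (n.factorial : ℝ) := by exact_mod_cast n.factorial_pos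
      apply le_of_eq
      field_simp
  have hRr : (0:ℝ) ≤ R - r₀ := by linarith
  have hdist : ∀ n : ℕ, ∀ u v : ℝ →ᵇ ℝ,
      dist (P^[n] u) (P^[n] v) ≤ (L*(R - r₀))^n / (n.factorial : ℝ) * dist u v := by
    intro n u v
    have h0 : (0:ℝ) ≤ (L*(R - r₀))^n / (n.factorial : ℝ) * dist u v :=
      mul_nonneg (div_nonneg (pow_nonneg (mul_nonneg hL hRr) n) (Nat.cast_nonneg _)) dist_nonneg
    refine (BoundedContinuousFunction.dist_le h0).2 fun r => ?_
    rw [Real.dist_eq]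
    refine (key n u v r).trans ?_
    rw [mul_pow]
    gcongr
    · linarith [hρ₀ r]
    · linarith [hρR r]
  obtain ⟨n, hn⟩ : ∃ n : ℕ, (L*(R - r₀))^n / (n.factorial : ℝ) < 1 :=
    ((FloorSemiring.tendsto_pow_div_factorial_atTop (K := ℝ)
      (L*(R - r₀))).eventually (gt_mem_nhds one_pos)).exists
  set Kc : NNReal := ((L*(R - r₀))^n / (n.factorial : ℝ)).toNNReal with hKc
  have hKcoe : (Kc : ℝ) = (L*(R - r₀))^n / (n.factorial : ℝ) :=
    Real.coe_toNNReal _ (div_nonneg (pow_nonneg (mul_nonneg hL hRr) n) (Nat.cast_nonneg _))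
  have hcontr : ContractingWith Kc (P^[n]) := by
    constructor
    · rw [← NNReal.coe_lt_coe, hKcoe, NNReal.coe_one]
      exact hn
    · apply LipschitzWith.of_dist_le_mul
      intro x y
      rw [hKcoe]
      exact hdist n x y
  have hfix : Function.IsFixedPt P (hcontr.fixedPoint (P^[n])) :=
    hcontr.isFixedPt_fixedPoint_iterate
  refine ⟨hcontr.fixedPoint (P^[n]), ?_, ?_⟩
  · intro r
    conv_lhs => rw [← hfix]
    rw [hPapp]
  · intro v hv
    have hfixv : Function.IsFixedPt P v := by
      ext r
      rw [hPapp]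
      exact (hv r).symm
    exact hcontr.fixedPoint_unique (hfixv.iterate n)
theorem riccati_aux (r₀ lam : ℝ) (hlam : 0 < lam) (ν : ℝ → ℝ) (hν : Antitone ν) :
    ∃ β β' : ℝ → ℝ,
      β r₀ = Filter.limsup (betaMinus lam ν) (nhdsWithin r₀ (Set.Ici r₀)) ∧
      MonotoneOn β (Set.Ici r₀) ∧
      (∀ r, r₀ ≤ r →
        IntervalIntegrable β' volume r₀ r ∧ β r = β r₀ + ∫ t in r₀..r, β' t) ∧
      (∀ᵐ t ∂(volume : Measure ℝ), r₀ ≤ t →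
        β' t = β t ^ 2 + ν t * β t - lam) ∧
      (∀ᵐ t ∂(volume : Measure ℝ), r₀ ≤ t → β t ≤ betaMinus lam ν t) := by
  have hbmono : Monotone (betaMinus lam ν) := betaMinus_mono lam hlam ν hν
  set b : ℝ → ℝ := betaMinus lam ν with hbdef
  set c : ℝ := Filter.limsup b (nhdsWithin r₀ (Set.Ici r₀)) with hcdef
  have hcb : ∀ t, r₀ < t → c ≤ b t := fun t ht => c_le_b r₀ lam ν hbmono t ht
  set L : ℝ → ℝ := fun R => 2 * |min c (b r₀)| + |ν r₀| + |ν R| with hLdef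
  set M : ℝ → ℝ := fun R => |min c (b r₀)| * L R with hMdef
  -- existence and uniqueness of the truncated solution on [r₀, R]
  have hex : ∀ R : ℝ, r₀ < R → ∃! u : ℝ →ᵇ ℝ,
      ∀ r, u r = c + ∫ s in r₀..(min (max r r₀) R), riccG lam c ν s (u s) := by
    intro R hR
    exact picard r₀ R c (L R) (M R) hR (by positivity) (by positivity) (riccG lam c ν)
      (fun u hu => riccG_meas lam c ν hlam hν u hu)
      (fun s hs x => riccG_bound r₀ lam c ν hlam hν R hs x)
      (fun s hs x x' => riccG_lip r₀ lam c ν hlam hν R hs x x')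
  choose U hU hUuniq using hex
  -- gluing
  have hglue : ∀ R₁ R₂ (h₁ : r₀ < R₁) (h₂ : R₁ ≤ R₂), ∀ r, r ≤ R₁ →
      U R₁ h₁ r = U R₂ (lt_of_lt_of_le h₁ h₂) r := by
    intro R₁ R₂ h₁ h₂ r hr
    set u₂ := U R₂ (lt_of_lt_of_le h₁ h₂) with hu₂
    set v : ℝ →ᵇ ℝ := u₂.compContinuous ⟨fun r => min r R₁, continuous_id.min continuous_const⟩
      with hv
    have hveq : ∀ r, v r = u₂ (min r R₁) := fun r => rfl
    have hvfix : ∀ r, v r = c + ∫ s in r₀..(min (max r r₀) R₁), riccG lam c ν s (v s) := by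
      intro r
      rw [hveq, hU R₂ (lt_of_lt_of_le h₁ h₂) (min r R₁)]
      have hend : min (max (min r R₁) r₀) R₂ = min (max r r₀) R₁ := by
        rcases le_total r R₁ with h | h
        · rw [min_eq_left h, min_eq_left (le_trans (max_le h h₁.le) h₂),
            min_eq_left (max_le h h₁.le)]
        · rw [min_eq_right h, max_eq_left h₁.le, min_eq_left h₂,
            min_eq_right (le_trans h (le_max_left _ _))]
      rw [hend]
      congr 1
      apply intervalIntegral.integral_congr
      intro s hs
      rw [Set.uIcc_of_le (le_min (le_max_right _ _) h₁.le)] at hs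
      have hs1 : min s R₁ = s := min_eq_left (hs.2.trans (min_le_right _ _))
      show riccG lam c ν s (u₂ s) = riccG lam c ν s (v s)
      rw [hveq s, hs1]
    have hvU : v = U R₁ h₁ := hUuniq R₁ h₁ v hvfix
    rw [← hvU, hveq r, min_eq_left hr]
  -- the global solution
  have haux : ∀ r : ℝ, r₀ < max r r₀ + 1 :=
    fun r => lt_of_le_of_lt (le_max_right r r₀) (lt_add_one _)
  set β : ℝ → ℝ := fun r => U (max r r₀ + 1) (haux r) r with hβdef
  have hβU : ∀ R (hR : r₀ < R) (r : ℝ), r ≤ R → β r = U R hR r := by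
    intro R hR r hr
    have h1 : max r r₀ + 1 ≤ max (max r r₀ + 1) R := le_max_left _ _
    have h2 : R ≤ max (max r r₀ + 1) R := le_max_right _ _
    have e1 := hglue (max r r₀ + 1) (max (max r r₀ + 1) R) (haux r) h1 r
      (le_trans (le_max_left r r₀) (by linarith [le_max_left r r₀]))
    have e2 := hglue R (max (max r r₀ + 1) R) hR h2 r hr
    rw [hβdef]
    simp only []
    rw [e1, e2]
  have hβeq : ∀ r, r₀ ≤ r → β r = c + ∫ s in r₀..r, riccG lam c ν s (β s) := by
    intro r hr
    have hR : r₀ < r + 1 := by linarith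
    rw [hβU (r+1) hR r (by linarith), hU (r+1) hR r,
      show min (max r r₀) (r+1) = r by rw [max_eq_left hr, min_eq_left (by linarith)]]
    congr 1
    apply intervalIntegral.integral_congr
    intro s hs
    rw [Set.uIcc_of_le hr] at hs
    show riccG lam c ν s (U (r+1) hR s) = riccG lam c ν s (β s)
    rw [hβU (r+1) hR s (by linarith [hs.2])]
  have hβr₀ : β r₀ = c := by
    have := hβeq r₀ le_rfl
    simpa [intervalIntegral.integral_same] using this
  have hβcont : Continuous β := by
    rw [continuous_iff_continuousAt]
    intro x
    have hR : r₀ < max x r₀ + 1 := haux x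
    have hev : ∀ᶠ r in nhds x, β r = U (max x r₀ + 1) hR r := by
      filter_upwards [Iio_mem_nhds
        (show x < max x r₀ + 1 from lt_of_le_of_lt (le_max_left _ _) (lt_add_one _))] with r hr
      exact hβU _ hR r hr.le
    exact ((U _ hR).continuous.continuousAt).congr (Filter.EventuallyEq.symm hev)
  
  -- the derivative
  set βd : ℝ → ℝ := fun t => riccG lam c ν t (β t) with hβddef
  have hβdmeas : Measurable βd := riccG_meas lam c ν hlam hν β hβcont.measurable
  have hβdnonneg : ∀ t, 0 ≤ βd t := fun t => riccG_nonneg lam c ν hlam t (β t)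
  have hβdint : ∀ a b', r₀ ≤ a → r₀ ≤ b' → IntervalIntegrable βd volume a b' := by
    intro a b' ha hb'
    refine aux_intInt hβdmeas (C := M (max a b')) (fun s hs => ?_)
    have h1 : r₀ ≤ min a b' := le_min ha hb'
    have hsm : s ∈ Set.Icc r₀ (max a b') := ⟨le_trans h1 hs.1.le, hs.2⟩
    rw [hβddef, hMdef, hLdef]
    exact riccG_bound r₀ lam c ν hlam hν (max a b') hsm (β s)
  have hadd : ∀ a b', r₀ ≤ a → a ≤ b' → β b' - β a = ∫ s in a..b', βd s := by
    intro a b' ha hab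
    show β b' - β a = intervalIntegral βd a b' volume
    have h1 := hβeq a ha
    have h2 := hβeq b' (le_trans ha hab)
    have h3 := intervalIntegral.integral_add_adjacent_intervals
      (hβdint r₀ a le_rfl ha) (hβdint a b' ha (le_trans ha hab))
    rw [h1, h2]
    linarith [h3]
  have hmono : MonotoneOn β (Set.Ici r₀) := by
    intro a ha b' hb' hab
    have := hadd a b' ha hab
    have h2 : 0 ≤ ∫ s in a..b', βd s :=
      intervalIntegral.integral_nonneg hab (fun u _ => hβdnonneg u)
    linarith
  -- upper bound via the barrier
  have hub : ∀ t, r₀ ≤ t → ∀ t', t < t' → β t ≤ max c (b t') := by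
    intro t ht t' htt'
    set K : ℝ := max c (b t') with hK
    set S : Set ℝ := Set.Icc r₀ t ∩ β ⁻¹' (Set.Iic K) with hS
    have hne : S.Nonempty := ⟨r₀, ⟨le_rfl, ht⟩, by
      simp only [Set.mem_preimage, Set.mem_Iic, hβr₀]; exact le_max_left _ _⟩
    have hbdd : BddAbove S := (BddAbove.mono Set.inter_subset_left) bddAbove_Icc
    have hcl : IsClosed S := isClosed_Icc.inter (isClosed_Iic.preimage hβcont)
    have hσS : sSup S ∈ S := hcl.csSup_mem hne hbdd
    set σ := sSup S with hσdef
    have hσt : σ ≤ t := hσS.1.2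
    have hσr₀ : r₀ ≤ σ := hσS.1.1
    have hβσ : β σ ≤ K := hσS.2
    have hzero : ∀ s ∈ Set.Ioc σ t, βd s = 0 := by
      intro s hsi
      have hsr₀ : r₀ ≤ s := le_trans hσr₀ hsi.1.le
      have hβs : K < β s := by
        by_contra hcon
        push_neg at hcon
        exact absurd (le_csSup hbdd (⟨⟨hsr₀, hsi.2⟩, hcon⟩ : s ∈ S)) (not_le.2 hsi.1)
      have hbs : b s ≤ K := le_trans (hbmono (hsi.2.trans htt'.le)) (le_max_right _ _)
      exact riccG_zero lam c ν hlam (le_trans hbs hβs.le)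
    have hint0 : ∫ s in σ..t, βd s = 0 := by
      rw [intervalIntegral.integral_of_le hσt]
      calc ∫ s in Set.Ioc σ t, βd s = ∫ s in Set.Ioc σ t, (0:ℝ) :=
            setIntegral_congr_fun measurableSet_Ioc hzero
        _ = 0 := by simp
    have := hadd σ t hσr₀ hσt
    rw [hint0] at this
    linarith
  -- almost-everywhere facts
  have hcount : Set.Countable {t : ℝ | ¬ContinuousAt b t} := hbmono.countable_not_continuousAt
  have hae : ∀ᵐ t ∂(volume : Measure ℝ),
      t ∉ ({t : ℝ | ¬ContinuousAt b t} ∪ {r₀} : Set ℝ) :=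
    (hcount.union (Set.countable_singleton r₀)).ae_notMem volume
  have hle_b : ∀ t, r₀ < t → ContinuousAt b t → β t ≤ b t := by
    intro t ht hc
    by_contra hcon
    push_neg at hcon
    set ε : ℝ := β t - b t with hε
    have hε0 : 0 < ε := by linarith
    obtain ⟨δ, hδ0, hδ⟩ := Metric.continuousAt_iff.1 hc ε hε0
    have h1 : β t ≤ max c (b (t + δ/2)) := hub t ht.le (t + δ/2) (by linarith)
    have h2 : |b (t + δ/2) - b t| < ε := by
      have hd : dist (t + δ/2) t < δ := by
        rw [Real.dist_eq, show t + δ/2 - t = δ/2 by ring, abs_of_pos (by linarith)]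
        linarith
      have := hδ hd
      rwa [Real.dist_eq] at this
    have h3 : c ≤ b (t + δ/2) := hcb _ (by linarith)
    rw [max_eq_right h3] at h1
    have := abs_lt.1 h2
    linarith [this.2]
  -- assemble
  refine ⟨β, βd, ?_, hmono, ?_, ?_, ?_⟩
  · rw [hβr₀]
  · intro r hr
    refine ⟨hβdint r₀ r le_rfl hr, ?_⟩
    rw [hβr₀, hβeq r hr]
  · filter_upwards [hae] with t htn htr
    simp only [Set.mem_union, Set.mem_setOf_eq, Set.mem_singleton_iff, not_or, not_not] at htn
    have ht : r₀ < t := lt_of_le_of_ne htr (Ne.symm htn.2)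
    have h1 : β t ≤ b t := hle_b t ht htn.1
    have h2 : c ≤ β t := by
      have := hmono (Set.self_mem_Ici) (Set.mem_Ici.2 htr) htr
      rwa [hβr₀] at this
    rw [hβddef]
    exact riccG_eq lam c ν hlam (le_trans (min_le_left _ _) h2) h1
  · filter_upwards [hae] with t htn htr
    simp only [Set.mem_union, Set.mem_setOf_eq, Set.mem_singleton_iff, not_or, not_not] at htn
    have ht : r₀ < t := lt_of_le_of_ne htr (Ne.symm htn.2)
    exact hle_b t ht htn.1

/-- `β̄₋(r) = limsup_{t→r} β₋(t)` (within the domain `[r₀,∞)`), the right-continuous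
(upper semicontinuous) modification of `β₋`. -/
noncomputable def betaMinusBar (r₀ lam : ℝ) (μ : ℝ → ℝ) (r : ℝ) : ℝ :=
  Filter.limsup (betaMinus lam μ) (nhdsWithin r (Set.Ici r₀))

/-- There exists a locally absolutely continuous, non-decreasing global
solution `β` on `[r₀,∞)` of the Riccati equation `β' = β² + μβ − λ` with
`β(r₀) = β̄₋(r₀)`, satisfying `β ≤ β₋` almost everywhere. -/
theorem riccati_global_solution_exists
    (r₀ lam : ℝ) (hlam : 0 < lam)
    (μ : ℝ → ℝ) (hμ : AntitoneOn μ (Set.Ici r₀)) :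
    ∃ β β' : ℝ → ℝ,
      -- initial condition
      β r₀ = betaMinusBar r₀ lam μ r₀ ∧
      -- β is non-decreasing on [r₀,∞)
      MonotoneOn β (Set.Ici r₀) ∧
      -- β is locally absolutely continuous on [r₀,∞): it is the integral of the
      -- locally integrable function β'
      (∀ r, r₀ ≤ r →
        IntervalIntegrable β' volume r₀ r ∧ β r = β r₀ + ∫ t in r₀..r, β' t) ∧
      -- the Riccati equation holds almost everywhere on [r₀,∞)
      (∀ᵐ t ∂(volume : Measure ℝ), r₀ ≤ t →
        β' t = β t ^ 2 + μ t * β t - lam) ∧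
      -- β ≤ β₋ almost everywhere on [r₀,∞)
      (∀ᵐ t ∂(volume : Measure ℝ), r₀ ≤ t → β t ≤ betaMinus lam μ t) := by
  set ν : ℝ → ℝ := fun s => μ (max s r₀) with hνdef
  have hν : Antitone ν := fun s t hst =>
    hμ (Set.mem_Ici.2 (le_max_right s r₀)) (Set.mem_Ici.2 (le_max_right t r₀))
      (max_le_max hst le_rfl)
  have hbeq : ∀ t, r₀ ≤ t → betaMinus lam ν t = betaMinus lam μ t := by
    intro t ht
    simp only [betaMinus, hνdef, max_eq_left ht]
  obtain ⟨β, β', h0, h1, h2, h3, h4⟩ := riccati_aux r₀ lam hlam ν hν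
  refine ⟨β, β', ?_, h1, h2, ?_, ?_⟩
  · rw [h0, betaMinusBar]
    apply Filter.limsup_congr
    filter_upwards [self_mem_nhdsWithin] with x hx
    exact hbeq x hx
  · filter_upwards [h3] with t ht htr
    have := ht htr
    rwa [show ν t = μ t by simp [hνdef, max_eq_left htr]] at this
  · filter_upwards [h4] with t ht htr
    have := ht htr
    rwa [hbeq t htr] at this
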